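/- arXiv:1810.11965 — 2 statements merged into one kernel-verified Lean document; each statement's English description precedes it below -/
import Mathlib

section
/- Let G be a 2-connected simple graph, s₁, s₂ two distinct vertices, and C a connected component of G - {s₁, s₂}. If B is a leaf block of C (a maximal 2-connected subgraph of C containing at most one cut vertex of C), then B contains a vertex adjacent in G to s₁ or a vertex adjacent in G to s₂, other than the cut vertex of C contained in B. -/
open SimpleGraph Set

variable {V : Type*}

/-- `C` is (the vertex set of) a connected component of the subgraph of `G` induced on `S`. -/
def IsCompOf (G : SimpleGraph V) (S C : Set V) : Prop :=
  C ⊆ S ∧ C.Nonempty ∧ (G.induce C).Connected ∧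
    ∀ D : Set V, C ⊆ D → D ⊆ S → (G.induce D).Connected → D = C

/-- `G` is 2-connected: connected, at least 3 vertices, and no cut vertex. -/
def TwoConn [Fintype V] (G : SimpleGraph V) : Prop :=
  3 ≤ Fintype.card V ∧ G.Connected ∧ ∀ v : V, (G.induce ({v} : Set V)ᶜ).Connected

/-- The induced subgraph on `S` is 2-connected. -/
def TwoConnOn (G : SimpleGraph V) (S : Set V) : Prop :=
  3 ≤ S.ncard ∧ (G.induce S).Connected ∧ ∀ v ∈ S, (G.induce (S \ {v})).Connected

/-- `v` is a cut vertex of the (connected) induced subgraph on `S`. -/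
def IsCutVertexOn (G : SimpleGraph V) (S : Set V) (v : V) : Prop :=
  v ∈ S ∧ (G.induce S).Connected ∧ ¬ (G.induce (S \ {v})).Connected

/-- The induced subgraph on `B` is connected and has no cut vertex of itself. -/
def NoCutSet (G : SimpleGraph V) (B : Set V) : Prop :=
  (G.induce B).Connected ∧ ∀ v ∈ B, (G.induce (B \ {v})).Connected

/-- `B` is (the vertex set of) a block of the induced subgraph on `S`:
a maximal subset inducing a connected subgraph without cut vertex. -/
def IsBlockOf (G : SimpleGraph V) (S B : Set V) : Prop :=
  B ⊆ S ∧ B.Nonempty ∧ NoCutSet G B ∧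
    ∀ B' : Set V, B ⊆ B' → B' ⊆ S → NoCutSet G B' → B' = B

/-!
Suppose no vertex of the leaf block `B` other than its cut vertex `a` sees `s₁` or `s₂`.
A vertex `x ≠ a` of `B` is not a cut vertex of `C`, so each neighbour `c ∈ C` of `x` is joined
to `B - x` by a path avoiding `x`; adding this ear to `B` keeps it free of cut vertices, so by
maximality `c ∈ B`. Hence `B - a` is closed under adjacency in `G - a`, which is connected since
`G` is 2-connected; so `B - a` contains `s₁`, although `B ⊆ C` avoids `s₁`.
-/

namespace SimpleGraph

variable {G : SimpleGraph V}

lemma exists_isPath_of_reachable_induce {S : Set V} {u v : V} {hu : u ∈ S} {hv : v ∈ S}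
    (h : (G.induce S).Reachable ⟨u, hu⟩ ⟨v, hv⟩) :
    ∃ p : G.Walk u v, p.IsPath ∧ ∀ y ∈ p.support, y ∈ S := by
  obtain ⟨p, hp⟩ := h.exists_isPath
  have hpS : ∀ y ∈ (p.map (Embedding.induce (G := G) S).toHom).support, y ∈ S := by
    intro y hy
    rw [Walk.support_map, List.mem_map] at hy
    obtain ⟨z, -, rfl⟩ := hy
    exact z.2
  exact ⟨_, hp.map (Embedding.induce (G := G) S).injective, hpS⟩

lemma mem_of_preconnected_induce_of_adj_closed {S T : Set V}
    (hS : (G.induce S).Preconnected) (hT : ∀ y ∈ T, ∀ z ∈ S, G.Adj y z → z ∈ T)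
    {u v : V} (hu : u ∈ S) (huT : u ∈ T) (hv : v ∈ S) : v ∈ T := by
  by_contra hvT
  obtain ⟨p⟩ := hS ⟨u, hu⟩ ⟨v, hv⟩
  obtain ⟨d, -, hd₁, hd₂⟩ := p.exists_boundary_dart {y : S | y.1 ∈ T} huT hvT
  exact hd₂ (hT _ hd₁ _ d.snd.2 d.adj)

lemma connected_induce_union_support_sdiff_start {B : Set V} {v z : V}
    (hB : (G.induce (B \ {v})).Connected) (p : G.Walk v z) (hp : p.IsPath) (hz : z ∈ B) :
    (G.induce ((B ∪ {y | y ∈ p.support}) \ {v})).Connected := by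
  cases p with
  | nil =>
    have : (B ∪ {y | y ∈ (Walk.nil : G.Walk v v).support}) \ {v} = B \ {v} := by
      ext y; simp
    rwa [this]
  | cons h q =>
    have hv : v ∉ q.support := (List.nodup_cons.mp (by simpa using hp.support_nodup)).1
    have hq : (B ∪ {y | y ∈ (Walk.cons h q).support}) \ {v} =
        B \ {v} ∪ {y | y ∈ q.support} := by
      ext y
      simp only [Walk.support_cons, List.mem_cons, Set.mem_sdiff, Set.mem_union,
        Set.mem_ofPred_eq, Set.mem_singleton_iff]
      have : y ∈ q.support → y ≠ v := by rintro hy rfl; exact hv hy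
      tauto
    rw [hq]
    exact induce_union_connected hB.preconnected q.connected_induce_support.preconnected
      ⟨z, ⟨hz, by rintro rfl; exact hv q.end_mem_support⟩, q.end_mem_support⟩

end SimpleGraph

section

variable {G : SimpleGraph V}

lemma IsCompOf.mem_of_adj {S C : Set V} (hC : IsCompOf G S C) {x z : V} (hx : x ∈ C)
    (hxz : G.Adj x z) (hz : z ∈ S) : z ∈ C := by
  obtain ⟨hCS, -, hCconn, hCmax⟩ := hC
  have hD := induce_union_connected hCconn.preconnected
    (induce_pair_connected_of_adj hxz).preconnected ⟨x, hx, Set.mem_insert x _⟩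
  rw [← hCmax _ Set.subset_union_left
    (Set.union_subset hCS (Set.insert_subset (hCS hx) (Set.singleton_subset_iff.mpr hz))) hD]
  exact Or.inr (Set.mem_insert_of_mem x rfl)

namespace NoCutSet

variable {B : Set V}

lemma exists_mem_ne (h : NoCutSet G B) (a : V) : ∃ b ∈ B, b ≠ a := by
  by_cases ha : a ∈ B
  · obtain ⟨⟨b, hb, hba⟩⟩ := (h.2 a ha).nonempty
    exact ⟨b, hb, hba⟩
  · obtain ⟨⟨b, hb⟩⟩ := h.1.nonempty
    exact ⟨b, hb, fun hba => ha (hba ▸ hb)⟩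

lemma connected_induce_sdiff_singleton (h : NoCutSet G B) (v : V) :
    (G.induce (B \ {v})).Connected := by
  by_cases hv : v ∈ B
  · exact h.2 v hv
  · rw [Set.sdiff_singleton_eq_self hv]
    exact h.1

lemma union_support (h : NoCutSet G B) {x b : V} (hx : x ∈ B) (hb : b ∈ B)
    (hxb : x ≠ b) (w : G.Walk x b) (hw : w.IsPath) :
    NoCutSet G (B ∪ {y | y ∈ w.support}) := by
  refine ⟨induce_union_connected h.1.preconnected w.connected_induce_support.preconnected
    ⟨x, hx, w.start_mem_support⟩, fun v _ => ?_⟩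
  have hBv := h.connected_induce_sdiff_singleton v
  by_cases hvw : v ∈ w.support
  · -- cutting the ear at `v` leaves two ears, each still attached to `B - v` at its far end
    classical
    set q := w.takeUntil v hvw
    set r := w.dropUntil v hvw
    have hw' : ∀ y, y ∈ w.support ↔ y ∈ q.reverse.support ∨ y ∈ r.support := by
      intro y
      rw [Walk.support_reverse, List.mem_reverse, ← Walk.mem_support_append_iff, w.take_spec hvw]
    have hsplit : (B ∪ {y | y ∈ w.support}) \ {v} =
        (B ∪ {y | y ∈ q.reverse.support}) \ {v} ∪ (B ∪ {y | y ∈ r.support}) \ {v} := by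
      ext y
      simp only [Set.mem_sdiff, Set.mem_union, Set.mem_ofPred_eq, hw']
      tauto
    obtain ⟨z, hz⟩ : (B \ {v}).Nonempty := by
      by_cases hvx : x = v
      · exact ⟨b, hb, fun hbv => hxb (hvx.trans hbv.symm)⟩
      · exact ⟨x, hx, hvx⟩
    rw [hsplit]
    exact induce_union_connected
      (connected_induce_union_support_sdiff_start hBv _ (hw.takeUntil hvw).reverse hx).preconnected
      (connected_induce_union_support_sdiff_start hBv _ (hw.dropUntil hvw) hb).preconnected
      ⟨z, ⟨Or.inl hz.1, hz.2⟩, ⟨Or.inl hz.1, hz.2⟩⟩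
  · have hvw' : v ∉ {y | y ∈ w.support} := hvw
    rw [Set.union_sdiff_distrib, Set.sdiff_singleton_eq_self hvw']
    exact induce_union_connected hBv.preconnected w.connected_induce_support.preconnected
      ⟨x, ⟨hx, by rintro rfl; exact hvw w.start_mem_support⟩, w.start_mem_support⟩

end NoCutSet

lemma IsBlockOf.mem_of_adj {C B : Set V} (hB : IsBlockOf G C B) {x c : V} (hx : x ∈ B)
    (hCx : (G.induce (C \ {x})).Connected) (hc : c ∈ C) (hxc : G.Adj x c) : c ∈ B := by
  obtain ⟨hBC, -, hBnc, hBmax⟩ := hB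
  obtain ⟨b, hb, hbx⟩ := hBnc.exists_mem_ne x
  obtain ⟨p, hp, hpC⟩ := exists_isPath_of_reachable_induce
    (hCx.preconnected ⟨c, hc, (G.ne_of_adj hxc).symm⟩ ⟨b, hBC hb, hbx⟩)
  have hxp : x ∉ p.support := fun h => (hpC x h).2 rfl
  have hear := hBnc.union_support hx hb hbx.symm (Walk.cons hxc p) (hp.cons hxp)
  have hearC : B ∪ {y | y ∈ (Walk.cons hxc p).support} ⊆ C := by
    rintro y (hy | hy)
    · exact hBC hy
    · rcases List.mem_cons.mp hy with rfl | hy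
      · exact hBC hx
      · exact (hpC y hy).1
  rw [← hBmax _ Set.subset_union_left hearC hear]
  exact Or.inr (List.mem_cons_of_mem x p.start_mem_support)

end

theorem stmt4_general {V : Type*} [Fintype V] (G : SimpleGraph V) (s₁ s₂ : V)
    (h2c : TwoConn G)
    (C : Set V) (hC : IsCompOf G ({s₁, s₂} : Set V)ᶜ C)
    (B : Set V) (hB : IsBlockOf G C B)
    (hleaf : ∀ a a', a ∈ B → a' ∈ B → IsCutVertexOn G C a →
      IsCutVertexOn G C a' → a = a') :
    ∃ x ∈ B, ¬ IsCutVertexOn G C x ∧ (G.Adj x s₁ ∨ G.Adj x s₂) := by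
  have hCS : C ⊆ ({s₁, s₂} : Set V)ᶜ := hC.1
  have hBC : B ⊆ C := hB.1
  by_contra! hcon
  obtain ⟨a, haB, ha⟩ : ∃ a ∈ B, ∀ y ∈ B, IsCutVertexOn G C y → y = a := by
    by_cases hcut : ∃ a ∈ B, IsCutVertexOn G C a
    · obtain ⟨a, haB, hacut⟩ := hcut
      exact ⟨a, haB, fun y hyB hycut => hleaf y a hyB haB hycut hacut⟩
    · obtain ⟨a, haB⟩ := hB.2.1
      exact ⟨a, haB, fun y hyB hycut => (hcut ⟨y, hyB, hycut⟩).elim⟩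
  have hclosed : ∀ y ∈ B \ {a}, ∀ z ∈ ({a} : Set V)ᶜ, G.Adj y z → z ∈ B \ {a} := by
    rintro y ⟨hyB, hya⟩ z hza hyz
    have hycut : ¬ IsCutVertexOn G C y := fun h => hya (ha y hyB h)
    have hCy : (G.induce (C \ {y})).Connected := by
      by_contra h
      exact hycut ⟨hBC hyB, hC.2.2.1, h⟩
    have hzC : z ∈ C := hC.mem_of_adj (hBC hyB) hyz (by
      rintro (rfl | rfl)
      exacts [(hcon y hyB hycut).1 hyz, (hcon y hyB hycut).2 hyz])
    exact ⟨hB.mem_of_adj hyB hCy hzC hyz, hza⟩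
  obtain ⟨b, hbB, hba⟩ := hB.2.2.1.exists_mem_ne a
  have hs₁a : s₁ ≠ a := by
    rintro rfl
    exact hCS (hBC haB) (Or.inl rfl)
  have hs₁B := mem_of_preconnected_induce_of_adj_closed (h2c.2.2 a).preconnected hclosed
    hba ⟨hbB, hba⟩ hs₁a
  exact hCS (hBC hs₁B.1) (Or.inl rfl)

theorem stmt4 {V : Type*} [Fintype V] (G : SimpleGraph V) (s₁ s₂ : V)
    (h2c : TwoConn G) (hne : s₁ ≠ s₂)
    (C : Set V) (hC : IsCompOf G ({s₁, s₂} : Set V)ᶜ C)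
    (B : Set V) (hB : IsBlockOf G C B)
    (hleaf : ∀ a a', a ∈ B → a' ∈ B → IsCutVertexOn G C a →
      IsCutVertexOn G C a' → a = a') :
    ∃ x ∈ B, ¬ IsCutVertexOn G C x ∧ (G.Adj x s₁ ∨ G.Adj x s₂) :=
  stmt4_general G s₁ s₂ h2c C hC B hB hleaf
end

section
/- Let G be a 2-connected simple graph on n ≥ 3 vertices and let n₁, n₂ be positive integers with n₁ + n₂ = n. Then there exists a partition of the vertex set into V₁ and V₂ with |V₁| = n₁, |V₂| = n₂ such that both induced subgraphs G[V₁] and G[V₂] are connected. -/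
open SimpleGraph Set

variable {V : Type*}

/-! Grow `S` one vertex at a time, keeping both `G[S]` and `G[Sᶜ]` connected. To add a vertex,
call `C ⊆ H` *closed in* `H` if no edge of `G` leads from `C` to `H \ C`, and take `u ∈ Sᶜ`
adjacent to `S` together with a nonempty closed subset `C` of `Sᶜ \ {u}`, with `|C|` minimal.
As `G - u` is connected, `C` contains a neighbour `a` of `S`. If `Sᶜ \ {a}` were disconnected,
its part avoiding `u` would meet `C` (as `Sᶜ` is connected) in a smaller closed set. -/

namespace SimpleGraph

variable {G : SimpleGraph V} {T H C D S : Set V} {u a s x y : V}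

def IsClosedIn (G : SimpleGraph V) (T C : Set V) : Prop :=
  ∀ ⦃x y⦄, x ∈ C → y ∈ T → G.Adj x y → y ∈ C

lemma IsClosedIn.mem_of_preconnected (hC : G.IsClosedIn T C) (hT : (G.induce T).Preconnected)
    (hx : x ∈ C) (hxT : x ∈ T) (hy : y ∈ T) : y ∈ C := by
  by_contra hyC
  obtain ⟨p⟩ := hT ⟨x, hxT⟩ ⟨y, hy⟩
  obtain ⟨d, -, hd₁, hd₂⟩ := p.exists_boundary_dart (Subtype.val ⁻¹' C) hx hyC
  exact hd₂ (hC hd₁ d.snd.2 d.adj)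

lemma IsClosedIn.inter_of_subset {T' : Set V} (hD : G.IsClosedIn T D) (hC : G.IsClosedIn T' C)
    (hDT' : D ⊆ T') : G.IsClosedIn T (D ∩ C) := fun _ _ hx hy hxy =>
  have hyD := hD hx.1 hy hxy
  ⟨hyD, hC hx.2 (hDT' hyD) hxy⟩

lemma isClosedIn_image_supp (c : (G.induce T).ConnectedComponent) :
    G.IsClosedIn T (Subtype.val '' c.supp) := by
  rintro _ y ⟨x, hx, rfl⟩ hy hxy
  exact ⟨⟨y, hy⟩, c.mem_supp_of_adj_mem_supp hx (by simpa using hxy), rfl⟩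

lemma exists_isClosedIn_notMem_of_not_connected (hT : ¬(G.induce T).Connected) (hu : u ∈ T) :
    ∃ D ⊆ T, D.Nonempty ∧ G.IsClosedIn T D ∧ u ∉ D := by
  obtain ⟨w, hw⟩ : ∃ w, ¬(G.induce T).Reachable ⟨u, hu⟩ w := by
    by_contra! h
    exact hT ((connected_iff_exists_forall_reachable _).mpr ⟨_, h⟩)
  set c := (G.induce T).connectedComponentMk w
  refine ⟨Subtype.val '' c.supp, by simp, ⟨w, w, rfl, rfl⟩, isClosedIn_image_supp c, ?_⟩
  rintro ⟨u', hu', rfl⟩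
  exact hw (c.reachable_of_mem_supp hu' rfl)

lemma IsClosedIn.exists_ssubset (hC : G.IsClosedIn (H \ {u}) C) (hH : (G.induce H).Preconnected)
    (hCsub : C ⊆ H \ {u}) (hu : u ∈ H) (ha : a ∈ C) (hHa : ¬(G.induce (H \ {a})).Connected) :
    ∃ D ⊆ H \ {a}, D ⊂ C ∧ D.Nonempty ∧ G.IsClosedIn (H \ {a}) D := by
  have hua : u ≠ a := fun h => (hCsub ha).2 h.symm
  obtain ⟨D, hDsub, hDne, hD, huD⟩ := exists_isClosedIn_notMem_of_not_connected hHa ⟨hu, hua⟩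
  have hDu : D ⊆ H \ {u} := fun x hx => ⟨(hDsub hx).1, fun hxu => huD (hxu ▸ hx)⟩
  refine ⟨D ∩ C, inter_subset_left.trans hDsub,
    ⟨inter_subset_right, fun h => (hDsub (h ha).1).2 rfl⟩, ?_, hD.inter_of_subset hC hDu⟩
  by_contra hDC
  have hDH : G.IsClosedIn H D := by
    intro x y hx hy hxy
    by_cases hya : y = a
    · subst hya
      exact absurd (hC ha (hDu hx) hxy.symm) fun hxC => hDC ⟨x, hx, hxC⟩
    · exact hD hx ⟨hy, hya⟩ hxy
  obtain ⟨x, hx⟩ := hDne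
  exact (hDsub (hDH.mem_of_preconnected hH hx (hDsub hx).1 (hCsub ha).1)).2 rfl

lemma IsClosedIn.exists_adj_of_connected_compl_singleton (hC : G.IsClosedIn (Sᶜ \ {u}) C)
    (hGu : (G.induce ({u} : Set V)ᶜ).Preconnected) (hCsub : C ⊆ Sᶜ \ {u}) (hCne : C.Nonempty)
    (hs : s ∈ S) (hsu : s ≠ u) : ∃ a ∈ C, ∃ b ∈ S, G.Adj a b := by
  by_contra! h
  have hC' : G.IsClosedIn {u}ᶜ C := fun x y hx hy hxy => hC hx ⟨fun hyS => h x hx y hyS hxy, hy⟩ hxy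
  obtain ⟨c, hc⟩ := hCne
  exact (hCsub (hC'.mem_of_preconnected hGu hc (hCsub hc).2 hsu)).1 hs

lemma exists_adj_connected_induce_compl_diff_singleton [Finite V] (hG : G.Connected)
    (hcut : ∀ v, (G.induce ({v} : Set V)ᶜ).Connected) (hS : S.Nonempty)
    (hSc : (G.induce Sᶜ).Connected) (hSc₂ : Sᶜ.Nontrivial) :
    ∃ u ∈ Sᶜ, (∃ s ∈ S, G.Adj u s) ∧ (G.induce (Sᶜ \ {u})).Connected := by
  by_contra! hbad
  obtain ⟨s, hs⟩ := hS
  have hmin : ∀ n u C, C.ncard = n → u ∈ Sᶜ → (∃ s ∈ S, G.Adj u s) → C ⊆ Sᶜ \ {u} →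
      C.Nonempty → ¬G.IsClosedIn (Sᶜ \ {u}) C := by
    intro n
    induction n using Nat.strong_induction_on with
    | _ n ih =>
    intro u C hn hu huS hCsub hCne hC
    obtain ⟨a, haC, haS⟩ := hC.exists_adj_of_connected_compl_singleton (hcut u).preconnected
      hCsub hCne hs fun h => hu (h ▸ hs)
    have haSc : a ∈ Sᶜ := (hCsub haC).1
    obtain ⟨D, hDsub, hDC, hDne, hD⟩ :=
      hC.exists_ssubset hSc.preconnected hCsub hu haC (hbad a haSc haS)
    exact ih _ (hn ▸ ncard_lt_ncard hDC) a D rfl haSc haS hDsub hDne hD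
  obtain ⟨⟨t, ht⟩⟩ := hSc.nonempty
  obtain ⟨p⟩ := hG.preconnected t s
  obtain ⟨d, -, hd₁, hd₂⟩ := p.exists_boundary_dart Sᶜ ht (not_not.mpr hs)
  obtain ⟨w, hw, hwd⟩ := hSc₂.exists_ne d.fst
  exact hmin _ d.fst (Sᶜ \ {d.fst}) rfl hd₁ ⟨d.snd, not_not.mp hd₂, d.adj⟩ subset_rfl
    ⟨w, hw, hwd⟩ fun _ _ _ hy _ => hy

lemma exists_connected_induce_compl_connected [Finite V] (hG : G.Connected)
    (hcut : ∀ v, (G.induce ({v} : Set V)ᶜ).Connected) {k : ℕ} (hk₁ : 1 ≤ k)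
    (hk : k < Nat.card V) :
    ∃ S : Set V, S.ncard = k ∧ (G.induce S).Connected ∧ (G.induce Sᶜ).Connected := by
  induction k, hk₁ using Nat.le_induction with
  | base =>
    obtain ⟨v⟩ : Nonempty V := (Nat.card_pos_iff.mp (by omega)).1
    refine ⟨{v}, ncard_singleton v, ?_, hcut v⟩
    rw [induce_singleton_eq_top]
    exact connected_top
  | succ k hk₁ ih =>
    obtain ⟨S, hScard, hSconn, hScconn⟩ := ih (by omega)
    have hcompl := ncard_add_ncard_compl S
    obtain ⟨u, hu, ⟨s, hs, hus⟩, hconn⟩ :=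
      exists_adj_connected_induce_compl_diff_singleton hG hcut
        (nonempty_of_ncard_ne_zero (by omega)) hScconn
        (one_lt_ncard_iff_nontrivial.mp (by omega))
    refine ⟨insert u S, by rw [ncard_insert_of_notMem hu, hScard], ?_, ?_⟩
    · rw [← singleton_union]
      exact connected_induce_union (by simp [connected_top.preconnected]) hSconn.preconnected
        rfl hs hus
    · have hcompl_insert : (insert u S)ᶜ = Sᶜ \ {u} := by ext; simp [and_comm]
      rwa [hcompl_insert]

end SimpleGraph

theorem stmt11 {V : Type*} [Fintype V] (G : SimpleGraph V)
    (h2c : TwoConn G) (n₁ n₂ : ℕ) (h₁ : 0 < n₁) (h₂ : 0 < n₂)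
    (hsum : n₁ + n₂ = Fintype.card V) :
    ∃ V₁ V₂ : Set V, V₁ ∪ V₂ = Set.univ ∧ V₁ ∩ V₂ = ∅ ∧
      V₁.ncard = n₁ ∧ V₂.ncard = n₂ ∧
      (G.induce V₁).Connected ∧ (G.induce V₂).Connected := by
  obtain ⟨-, hG, hcut⟩ := h2c
  obtain ⟨S, hScard, hSconn, hScconn⟩ :=
    exists_connected_induce_compl_connected hG hcut h₁ (by rw [Nat.card_eq_fintype_card]; omega)
  have hcompl := ncard_add_ncard_compl S
  rw [Nat.card_eq_fintype_card] at hcompl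
  exact ⟨S, Sᶜ, union_compl_self S, inter_compl_self S, hScard, by omega, hSconn, hScconn⟩
end
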